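/- Let C be a symmetric monoidal closed category and S a class of morphisms of C. Call an object X of C S-local if for every morphism f : A ⟶ B in S, precomposition with f induces a bijection Hom(B, X) → Hom(A, X); call a morphism g : Y ⟶ Z an S-equivalence if for every S-local object X, precomposition with g induces a bijection Hom(Z, X) → Hom(Y, X). Then the following are equivalent: (i) for every S-equivalence g : Y ⟶ Z and every object W of C, the morphism g ⊗ id_W : Y ⊗ W ⟶ Z ⊗ W is an S-equivalence; (ii) for every object W of C and every S-local object X, the internal hom object [W, X] is S-local. -/
import Mathlib


open CategoryTheory MonoidalCategory

/-- An object `X` is `S`-local if precomposition with every morphism in `S` induces a bijection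
on hom-sets into `X`. -/
def IsSLocal {C : Type*} [Category C] (S : MorphismProperty C) (X : C) : Prop :=
  ∀ ⦃A B : C⦄ (f : A ⟶ B), S f → Function.Bijective (fun g : B ⟶ X => f ≫ g)

/-- A morphism `g` is an `S`-equivalence if precomposition with `g` induces a bijection on
hom-sets into every `S`-local object. -/
def IsSEquivalence {C : Type*} [Category C] (S : MorphismProperty C) ⦃Y Z : C⦄
    (g : Y ⟶ Z) : Prop :=
  ∀ (X : C), IsSLocal S X → Function.Bijective (fun h : Z ⟶ X => g ≫ h)

/-- The currying equivalence `(Z ⊗ W ⟶ X) ≃ (Z ⟶ [W, X])` obtained from the braiding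
followed by the tensor-hom adjunction. -/
noncomputable def curryEquiv {C : Type*} [Category C] [MonoidalCategory C]
    [SymmetricCategory C] [MonoidalClosed C] (Z W X : C) :
    (Z ⊗ W ⟶ X) ≃ (Z ⟶ (ihom W).obj X) :=
  ((β_ W Z).homFromEquiv.symm).trans ((ihom.adjunction W).homEquiv Z X)

lemma curryEquiv_naturality {C : Type*} [Category C] [MonoidalCategory C]
    [SymmetricCategory C] [MonoidalClosed C] {Y Z W X : C} (g : Y ⟶ Z) (h : Z ⊗ W ⟶ X) :
    curryEquiv Y W X ((g ▷ W) ≫ h) = g ≫ curryEquiv Z W X h := by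
  simp only [curryEquiv, Equiv.trans_apply, Iso.homFromEquiv, Equiv.coe_fn_symm_mk,
    Adjunction.homEquiv_apply]
  have : (β_ W Y).hom ≫ (g ▷ W) ≫ h = (W ◁ g) ≫ (β_ W Z).hom ≫ h := by
    rw [← Category.assoc, ← Category.assoc, BraidedCategory.braiding_naturality_right]
  rw [this]
  exact (ihom.adjunction W).homEquiv_naturality_left g ((β_ W Z).hom ≫ h)

lemma bij_transfer {α β α' β' : Type*} (eα : α ≃ α') (eβ : β ≃ β') (F : α → β) (F' : α' → β')
    (hcomm : ∀ a, eβ (F a) = F' (eα a)) : Function.Bijective F ↔ Function.Bijective F' := by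
  have : F' = eβ ∘ F ∘ eα.symm := by
    funext a'
    simpa using (hcomm (eα.symm a')).symm
  subst this
  constructor
  · intro h
    exact eβ.bijective.comp (h.comp eα.symm.bijective)
  · intro h
    have := eβ.symm.bijective.comp (h.comp eα.bijective)
    convert this using 1
    funext a; simp

/-- In a symmetric monoidal closed category, a class `S` of morphisms is idealistic
(tensoring any `S`-equivalence with any object yields an `S`-equivalence) if and only if
for every object `W` and every `S`-local object `X`, the internal hom `[W, X]` is `S`-local. -/
theorem idealistic_iff_ihom_preserves_local
    {C : Type*} [Category C] [MonoidalCategory C] [SymmetricCategory C] [MonoidalClosed C]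
    (S : MorphismProperty C) :
    (∀ ⦃Y Z : C⦄ (g : Y ⟶ Z), IsSEquivalence S g → ∀ W : C, IsSEquivalence S (g ▷ W)) ↔
    (∀ (W X : C), IsSLocal S X → IsSLocal S ((ihom W).obj X)) := by
  constructor
  · intro hideal W X hX A B f hf
    -- f ∈ S is an S-equivalence
    have hfe : IsSEquivalence S f := fun X' hX' => hX' f hf
    have hfw := hideal f hfe W X hX
    exact (bij_transfer (curryEquiv B W X) (curryEquiv A W X)
      (fun h : B ⊗ W ⟶ X => (f ▷ W) ≫ h)
      (fun h : B ⟶ (ihom W).obj X => f ≫ h)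
      (fun h => curryEquiv_naturality f h)).mp hfw
  · intro hloc Y Z g hg W X hX
    have hbij : Function.Bijective (fun h : Z ⟶ (ihom W).obj X => g ≫ h) :=
      hg _ (hloc W X hX)
    exact (bij_transfer (curryEquiv Z W X) (curryEquiv Y W X)
      (fun h : Z ⊗ W ⟶ X => (g ▷ W) ≫ h)
      (fun h : Z ⟶ (ihom W).obj X => g ≫ h)
      (fun h => curryEquiv_naturality g h)).mpr hbij
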